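/- Dimension formula for orbit closures: the orbit closure corresponding to a quiver rank array r in the representation space of a bipartite type A quiver has dimension d_x d_y − Σ_{i=2}^{2n+1} Σ_{j=1}^{2n} (b_{i-1,n+1} − b_{i-1,j}) (b_{i,j} + b_{i-1,j-1} − b_{i,j-1} − b_{i-1,j}), where b = b(r) is the block rank matrix; equivalently, the length of the Zelevinsky permutation v(r) is given by the displayed double sum, and dim O̅_r = l(w) − l(v(r)) with l(w) = d_x d_y. -/

import Mathlib

/-!
Inside one block row, and inside one block column, the `1`s of `σ` run from northwest to
southeast, so two `1`s in the same block row or block column never form an inversion: a pair of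
`1`s is an inversion exactly when its two blocks lie strictly southwest/northeast of each other.
Grouping the pairs by blocks, the length of `σ` is the sum over blocks `(i, j)` of the number of
`1`s in the block times the number of `1`s strictly northeast of it. The latter is a double sum of
mixed second differences of `b`, which telescopes to `b (i-1) (2n+1) - b (i-1) j` because
`b 0 _ = 0`.
-/

/-- Cumulative block sizes: block `k` (0-indexed) occupies indices
`cum f k ≤ r < cum f (k+1)`. -/
def cum (f : ℕ → ℕ) (k : ℕ) : ℕ := ∑ i ∈ Finset.range k, f i

open Finset

lemma card_filter_comp_eq_sum_fibers {α κ : Type*} [Fintype α] [DecidableEq κ] (key : α → κ)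
    (t : Finset κ) (ht : ∀ x, key x ∈ t) (P : κ → Prop) [DecidablePred P] :
    #{x | P (key x)} = ∑ a ∈ t with P a, #{x | key x = a} := by
  rw [card_eq_sum_card_fiberwise (f := key) (t := {a ∈ t | P a})
    (fun x hx => mem_filter.2 ⟨ht x, (mem_filter.1 hx).2⟩)]
  refine sum_congr rfl fun a ha => congrArg card ?_
  ext x
  simp only [mem_filter, mem_univ, true_and, and_iff_right_iff_imp]
  rintro rfl
  exact (mem_filter.1 ha).2

lemma card_filter_pairs_eq_sum_fibers {α κ : Type*} [Fintype α] [DecidableEq κ] (key : α → κ)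
    (t : Finset κ) (ht : ∀ x, key x ∈ t) (Q : κ → κ → Prop) [DecidableRel Q] :
    #{p : α × α | Q (key p.1) (key p.2)}
      = ∑ c ∈ t, #{x | key x = c} * ∑ a ∈ t with Q a c, #{x | key x = a} := by
  have hrows : #{p : α × α | Q (key p.1) (key p.2)} = ∑ y, #{x | Q (key x) (key y)} := by
    simp only [card_filter, Fintype.sum_prod_type]
    exact sum_comm
  rw [hrows, ← sum_fiberwise_of_maps_to (fun y _ => ht y)]
  refine sum_congr rfl fun c _ => ?_
  rw [← card_filter_comp_eq_sum_fibers key t ht (Q · c), ← smul_eq_mul, ← sum_const]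
  exact sum_congr rfl fun y hy => by rw [(mem_filter.1 hy).2]

lemma sum_Icc_sub_pred {M : Type*} [AddCommGroup M] (g : ℕ → M) {j L : ℕ} (hjL : j ≤ L) :
    ∑ q ∈ Icc (j + 1) L, (g q - g (q - 1)) = g L - g j := by
  induction L, hjL using Nat.le_induction with
  | base => simp
  | succ L hjL ih =>
    rw [sum_Icc_succ_top (by omega), ih, Nat.add_sub_cancel]
    abel

lemma sum_Icc_sum_Icc_mixedDiff {M : Type*} [AddCommGroup M] (G : ℕ → ℕ → M) (m : ℕ) {j L : ℕ}
    (hjL : j ≤ L) :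
    ∑ p ∈ Icc 1 m, ∑ q ∈ Icc (j + 1) L, (G p q + G (p - 1) (q - 1) - G p (q - 1) - G (p - 1) q)
      = G m L - G m j - (G 0 L - G 0 j) := by
  have hrow : ∀ p, ∑ q ∈ Icc (j + 1) L, (G p q - G p (q - 1)) = G p L - G p j :=
    fun p => sum_Icc_sub_pred (G p) hjL
  calc _ = ∑ p ∈ Icc (0 + 1) m, ((G p L - G p j) - (G (p - 1) L - G (p - 1) j)) := by
        refine sum_congr rfl fun p _ => ?_
        rw [← hrow, ← hrow, ← sum_sub_distrib]
        exact sum_congr rfl fun q _ => by abel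
    _ = _ := sum_Icc_sub_pred (fun p => G p L - G p j) (Nat.zero_le m)

lemma sum_northeast_mixedDiff (b : ℕ → ℕ → ℤ) (hb0 : ∀ j, b 0 j = 0) {L i j : ℕ}
    (hi : i ≤ L + 1) (hj : j ≤ L) :
    ∑ a ∈ Icc 1 L ×ˢ Icc 1 L with a.1 < i ∧ j < a.2,
        (b a.1 a.2 + b (a.1 - 1) (a.2 - 1) - b a.1 (a.2 - 1) - b (a.1 - 1) a.2)
      = b (i - 1) L - b (i - 1) j := by
  have hnortheast : ({a ∈ Icc 1 L ×ˢ Icc 1 L | a.1 < i ∧ j < a.2} : Finset (ℕ × ℕ))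
      = Icc 1 (i - 1) ×ˢ Icc (j + 1) L := by
    ext a
    simp only [mem_filter, mem_product, mem_Icc]
    omega
  rw [hnortheast, sum_product, sum_Icc_sum_Icc_mixedDiff b _ hj, hb0, hb0, sub_zero, sub_zero]

lemma sum_product_eq_drop_first_row_last_col (b : ℕ → ℕ → ℤ) (hb0 : ∀ j, b 0 j = 0) (F : ℕ → ℕ → ℤ)
    (m : ℕ) :
    ∑ c ∈ Icc 1 (m + 1) ×ˢ Icc 1 (m + 1), (b (c.1 - 1) (m + 1) - b (c.1 - 1) c.2) * F c.1 c.2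
      = ∑ i ∈ Icc 2 (m + 1), ∑ j ∈ Icc 1 m, (b (i - 1) (m + 1) - b (i - 1) j) * F i j := by
  rw [sum_product]
  symm
  refine sum_subset (Icc_subset_Icc (by omega) le_rfl) (fun i hi hi' => ?_) |>.trans
    (sum_congr rfl fun i _ => sum_subset (Icc_subset_Icc le_rfl (by omega)) fun j hj hj' => ?_)
  · obtain rfl : i = 1 := by simp only [mem_Icc] at hi hi'; omega
    simp [hb0]
  · obtain rfl : j = m + 1 := by simp only [mem_Icc] at hj hj'; omega
    simp

lemma cum_mono (f : ℕ → ℕ) : Monotone (cum f) := fun _ _ hij =>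
  sum_le_sum_of_subset (range_subset_range.2 hij)

noncomputable def blockOf (f : ℕ → ℕ) (x : ℕ) : ℕ := sInf {k | x < cum f k}

section blockOf

variable {f : ℕ → ℕ} {x y k i : ℕ}

lemma lt_cum_blockOf (hx : x < cum f k) : x < cum f (blockOf f x) :=
  Nat.sInf_mem (s := {k | x < cum f k}) ⟨k, hx⟩

lemma blockOf_le (hx : x < cum f k) : blockOf f x ≤ k := Nat.sInf_le hx

lemma cum_blockOf_sub_one_le (f : ℕ → ℕ) (x : ℕ) : cum f (blockOf f x - 1) ≤ x := by
  rcases Nat.eq_zero_or_pos (blockOf f x) with h0 | hpos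
  · simp [h0, cum]
  · exact not_lt.1 (Nat.notMem_of_lt_sInf (s := {k | x < cum f k}) (Nat.sub_lt hpos one_pos))

lemma one_le_blockOf (hx : x < cum f k) : 1 ≤ blockOf f x := by
  by_contra! h0
  simpa [Nat.lt_one_iff.1 h0, cum] using lt_cum_blockOf hx

lemma blockOf_eq_iff (hi : 1 ≤ i) : blockOf f x = i ↔ cum f (i - 1) ≤ x ∧ x < cum f i := by
  constructor
  · rintro rfl
    exact ⟨cum_blockOf_sub_one_le f x, Nat.sInf_mem (Nat.nonempty_of_pos_sInf hi)⟩
  · rintro ⟨hlo, hhi⟩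
    refine le_antisymm (blockOf_le hhi) (Nat.le_of_pred_lt ?_)
    by_contra! hle
    exact hlo.not_gt ((lt_cum_blockOf hhi).trans_le (cum_mono f hle))

lemma blockOf_mono (hxy : x ≤ y) (hy : y < cum f k) : blockOf f x ≤ blockOf f y :=
  Nat.sInf_le (hxy.trans_lt (lt_cum_blockOf hy))

lemma lt_of_blockOf_lt (hx : x < cum f k) (h : blockOf f x < blockOf f y) : x < y :=
  calc x < cum f (blockOf f x) := lt_cum_blockOf hx
    _ ≤ cum f (blockOf f y - 1) := cum_mono f (Nat.le_sub_one_of_lt h)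
    _ ≤ y := cum_blockOf_sub_one_le f y

end blockOf

def StrictMonoOnBlocks (f : ℕ → ℕ) (L : ℕ) {d : ℕ} {β : Type*} [Preorder β] (τ : Fin d → β) :
    Prop :=
  ∀ (i : ℕ) (r r' : Fin d), i < L → cum f i ≤ r.val → r'.val < cum f (i + 1) → r < r' → τ r < τ r'

lemma blockOf_lt_of_inversion {f : ℕ → ℕ} {L d : ℕ} {β : Type*} [Preorder β] {τ : Fin d → β}
    (hτ : StrictMonoOnBlocks f L τ) (hd : d ≤ cum f L) {r r' : Fin d} (hr : r < r')
    (hinv : τ r' < τ r) : blockOf f r < blockOf f r' := by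
  have hrL : (r : ℕ) < cum f L := r.isLt.trans_le hd
  refine (blockOf_mono (Fin.le_def.1 hr.le) (r'.isLt.trans_le hd)).lt_of_ne fun heq => ?_
  have hr1 := one_le_blockOf hrL
  obtain ⟨hlo, -⟩ := (blockOf_eq_iff hr1).1 rfl
  obtain ⟨-, hhi⟩ := (blockOf_eq_iff hr1).1 heq.symm
  have hblk : blockOf f r - 1 < L := by have := blockOf_le hrL; omega
  exact lt_asymm hinv (hτ _ r r' hblk hlo (by rwa [Nat.sub_add_cancel hr1]) hr)

theorem inversion_iff_blockOf_lt {h w : ℕ → ℕ} {L d : ℕ} {σ : Equiv.Perm (Fin d)}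
    (hh : d ≤ cum h L) (hw : d ≤ cum w L)
    (hrow : StrictMonoOnBlocks h L σ) (hcol : StrictMonoOnBlocks w L σ.symm) (r r' : Fin d) :
    r < r' ∧ σ r' < σ r ↔ blockOf h r < blockOf h r' ∧ blockOf w (σ r') < blockOf w (σ r) := by
  constructor
  · rintro ⟨hr, hinv⟩
    exact ⟨blockOf_lt_of_inversion hrow hh hr hinv,
      blockOf_lt_of_inversion hcol hw hinv (by simpa using hr)⟩
  · rintro ⟨hr, hinv⟩
    exact ⟨Fin.lt_def.2 (lt_of_blockOf_lt (r.isLt.trans_le hh) hr),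
      Fin.lt_def.2 (lt_of_blockOf_lt ((σ r').isLt.trans_le hw) hinv)⟩

noncomputable def blockPos (h w : ℕ → ℕ) {d : ℕ} (σ : Fin d → Fin d) (r : Fin d) : ℕ × ℕ :=
  (blockOf h r, blockOf w (σ r))

section blockPos

variable {h w : ℕ → ℕ} {L d : ℕ}

lemma blockPos_mem (σ : Fin d → Fin d) (hh : d ≤ cum h L) (hw : d ≤ cum w L) (r : Fin d) :
    blockPos h w σ r ∈ Icc 1 L ×ˢ Icc 1 L := by
  have hr : (r : ℕ) < cum h L := r.isLt.trans_le hh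
  have hσr : (σ r : ℕ) < cum w L := (σ r).isLt.trans_le hw
  simp only [blockPos, mem_product, mem_Icc]
  exact ⟨⟨one_le_blockOf hr, blockOf_le hr⟩, one_le_blockOf hσr, blockOf_le hσr⟩

lemma card_blockPos_eq (σ : Fin d → Fin d) {i j : ℕ} (hi : 1 ≤ i) (hj : 1 ≤ j) :
    #{r | blockPos h w σ r = (i, j)} = #{r : Fin d | cum h (i - 1) ≤ r.val ∧ r.val < cum h i ∧
      cum w (j - 1) ≤ (σ r).val ∧ (σ r).val < cum w j} := by
  simp only [blockPos, Prod.mk.injEq, blockOf_eq_iff hi, blockOf_eq_iff hj, and_assoc]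

theorem card_inversions_eq_sum_blockPos {σ : Equiv.Perm (Fin d)}
    (hh : d ≤ cum h L) (hw : d ≤ cum w L)
    (hrow : StrictMonoOnBlocks h L σ) (hcol : StrictMonoOnBlocks w L σ.symm) :
    #{p : Fin d × Fin d | p.1 < p.2 ∧ σ p.2 < σ p.1}
      = ∑ c ∈ Icc 1 L ×ˢ Icc 1 L, #{r | blockPos h w σ r = c} *
          ∑ a ∈ Icc 1 L ×ˢ Icc 1 L with a.1 < c.1 ∧ c.2 < a.2, #{r | blockPos h w σ r = a} := by
  rw [← card_filter_pairs_eq_sum_fibers _ _ (blockPos_mem σ hh hw)]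
  congr 1
  ext p
  rw [mem_filter, mem_filter]
  simp only [mem_univ, true_and, blockPos]
  exact inversion_iff_blockOf_lt hh hw hrow hcol p.1 p.2

end blockPos

theorem stmt19_general (n : ℕ) (h w : ℕ → ℕ) (d : ℕ)
    (hd : d = cum h (2 * n + 1)) (hw : d = cum w (2 * n + 1))
    (b : ℕ → ℕ → ℤ)
    (hb0r : ∀ j, b 0 j = 0)
    (σ : Equiv.Perm (Fin d))
    (hcount : ∀ i j, 1 ≤ i → i ≤ 2 * n + 1 → 1 ≤ j → j ≤ 2 * n + 1 →
      ((Finset.univ.filter (fun r : Fin d =>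
          cum h (i - 1) ≤ r.val ∧ r.val < cum h i ∧
          cum w (j - 1) ≤ (σ r).val ∧ (σ r).val < cum w j)).card : ℤ)
        = b i j + b (i - 1) (j - 1) - b i (j - 1) - b (i - 1) j)
    (mono_row : ∀ (i : ℕ) (r r' : Fin d), i < 2 * n + 1 →
      cum h i ≤ r.val → r'.val < cum h (i + 1) → r < r' → σ r < σ r')
    (mono_col : ∀ (j : ℕ) (c c' : Fin d), j < 2 * n + 1 →
      cum w j ≤ c.val → c'.val < cum w (j + 1) → c < c' → σ.symm c < σ.symm c') :
    ((Finset.univ.filter (fun pr : Fin d × Fin d =>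
        pr.1 < pr.2 ∧ σ pr.2 < σ pr.1)).card : ℤ)
      = ∑ i ∈ Finset.Icc 2 (2 * n + 1), ∑ j ∈ Finset.Icc 1 (2 * n),
          (b (i - 1) (2 * n + 1) - b (i - 1) j) *
          (b i j + b (i - 1) (j - 1) - b i (j - 1) - b (i - 1) j) := by
  set blocks := Icc 1 (2 * n + 1) ×ˢ Icc 1 (2 * n + 1)
  have hfiber : ∀ c ∈ blocks, (#{r | blockPos h w σ r = c} : ℤ)
      = b c.1 c.2 + b (c.1 - 1) (c.2 - 1) - b c.1 (c.2 - 1) - b (c.1 - 1) c.2 := by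
    rintro ⟨i, j⟩ hc
    simp only [blocks, mem_product, mem_Icc] at hc
    rw [card_blockPos_eq σ hc.1.1 hc.2.1]
    exact hcount i j hc.1.1 hc.1.2 hc.2.1 hc.2.2
  have hnortheast : ∀ c ∈ blocks,
      ∑ a ∈ blocks with a.1 < c.1 ∧ c.2 < a.2, (#{r | blockPos h w σ r = a} : ℤ)
        = b (c.1 - 1) (2 * n + 1) - b (c.1 - 1) c.2 := by
    rintro ⟨i, j⟩ hc
    simp only [blocks, mem_product, mem_Icc] at hc
    rw [← sum_northeast_mixedDiff b hb0r (by omega) hc.2.2]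
    exact sum_congr rfl fun a ha => hfiber a (mem_filter.1 ha).1
  rw [card_inversions_eq_sum_blockPos hd.le hw.le mono_row mono_col]
  push_cast
  calc _ = ∑ c ∈ blocks, (b (c.1 - 1) (2 * n + 1) - b (c.1 - 1) c.2) *
          (b c.1 c.2 + b (c.1 - 1) (c.2 - 1) - b c.1 (c.2 - 1) - b (c.1 - 1) c.2) :=
        sum_congr rfl fun c hc => by rw [hfiber c hc, hnortheast c hc, mul_comm]
    _ = _ := sum_product_eq_drop_first_row_last_col b hb0r
          (fun i j => b i j + b (i - 1) (j - 1) - b i (j - 1) - b (i - 1) j) (2 * n)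

/-- dimension formula for orbit closures, combinatorial core: the orbit
closure of a quiver rank array `r` has dimension `d_x d_y - l(v(r))` with
`l(v(r))` given by the displayed double sum.  Combinatorial core: let
`v(r) = σ` be the Zelevinsky permutation attached to the `(2n+1) × (2n+1)` block rank
matrix `b` (so that the number of `1`s of `σ` in block `(i,j)` is the mixed second
difference `b i j + b (i-1) (j-1) - b i (j-1) - b (i-1) j`, with the `1`s arranged
NW-to-SE within each block row and each block column).  Then the length of `σ`
(its number of inversions) equals
`Σ_{i=2}^{2n+1} Σ_{j=1}^{2n} (b (i-1) (2n+1) - b (i-1) j) ⬝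
  (b i j + b (i-1) (j-1) - b i (j-1) - b (i-1) j)`,
the first factor being the number of `1`s strictly northeast of block `(i,j)`. -/
theorem stmt19 (n : ℕ) (h w : ℕ → ℕ) (d : ℕ)
    (hd : d = cum h (2 * n + 1)) (hw : d = cum w (2 * n + 1))
    (b : ℕ → ℕ → ℤ)
    (hb0r : ∀ j, b 0 j = 0) (hb0c : ∀ i, b i 0 = 0)
    (σ : Equiv.Perm (Fin d))
    (hcount : ∀ i j, 1 ≤ i → i ≤ 2 * n + 1 → 1 ≤ j → j ≤ 2 * n + 1 →
      ((Finset.univ.filter (fun r : Fin d =>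
          cum h (i - 1) ≤ r.val ∧ r.val < cum h i ∧
          cum w (j - 1) ≤ (σ r).val ∧ (σ r).val < cum w j)).card : ℤ)
        = b i j + b (i - 1) (j - 1) - b i (j - 1) - b (i - 1) j)
    (mono_row : ∀ (i : ℕ) (r r' : Fin d), i < 2 * n + 1 →
      cum h i ≤ r.val → r'.val < cum h (i + 1) → r < r' → σ r < σ r')
    (mono_col : ∀ (j : ℕ) (c c' : Fin d), j < 2 * n + 1 →
      cum w j ≤ c.val → c'.val < cum w (j + 1) → c < c' → σ.symm c < σ.symm c') :
    ((Finset.univ.filter (fun pr : Fin d × Fin d =>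
        pr.1 < pr.2 ∧ σ pr.2 < σ pr.1)).card : ℤ)
      = ∑ i ∈ Finset.Icc 2 (2 * n + 1), ∑ j ∈ Finset.Icc 1 (2 * n),
          (b (i - 1) (2 * n + 1) - b (i - 1) j) *
          (b i j + b (i - 1) (j - 1) - b i (j - 1) - b (i - 1) j) :=
  stmt19_general n h w d hd hw b hb0r σ hcount mono_row mono_col
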